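/- In a real inner product space, for fixed points x₁,…,xₙ in a ball of radius D, the weighted barycenter is Lipschitz in each mass: if mⱼ changes to mⱼ' (both positive, other masses fixed), then the barycenters c and c' satisfy dist(c, c') ≤ (2D * |mⱼ - mⱼ'|)/(∑_{i≠j} mᵢ + min(mⱼ, mⱼ')). -/

import Mathlib

/-!
Changing the mass of `x j` from `m j` to `t` moves the barycenter along the line through `x j`:
`c' - c = ((t - m j) / S') • (x j - c)`, with `S'` the new total mass. By convexity `c` lies in
the ball, so `dist (x j) c ≤ 2 * D`, and `S' ≥ ∑_{i ≠ j} m i + min (m j) t`.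
-/

open Finset Function

section CenterMassUpdate

variable {ι 𝕜 E : Type*} [DecidableEq ι] {s : Finset ι} {j : ι}

theorem Finset.sum_update_eq_sum_add {M : Type*} [AddCommGroup M] (hj : j ∈ s) (f : ι → M)
    (b : M) : ∑ i ∈ s, update f j b i = ∑ i ∈ s, f i + (b - f j) := by
  rw [sum_update_of_mem hj, sdiff_singleton_eq_erase, ← add_sum_erase s f hj]
  abel

theorem Finset.centerMass_update_sub_centerMass [Field 𝕜] [AddCommGroup E] [Module 𝕜 E]
    {w : ι → 𝕜} (z : ι → E) (hj : j ∈ s) (t : 𝕜) (hw : ∑ i ∈ s, w i ≠ 0)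
    (hw' : ∑ i ∈ s, update w j t i ≠ 0) :
    s.centerMass (update w j t) z - s.centerMass w z
      = ((t - w j) / ∑ i ∈ s, update w j t i) • (z j - s.centerMass w z) := by
  have hsmul : ∑ i ∈ s, update w j t i • z i = ∑ i ∈ s, w i • z i + (t - w j) • z j := by
    have hterm (i : ι) : update w j t i • z i = update (fun i ↦ w i • z i) j (t • z j) i := by
      rcases eq_or_ne i j with rfl | h <;> simp [*]
    simp only [hterm, sum_update_eq_sum_add hj, sub_smul]
  rw [sum_update_eq_sum_add hj] at hw' ⊢
  simp only [centerMass, hsmul, sum_update_eq_sum_add hj]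
  generalize ∑ i ∈ s, w i = W at *
  match_scalars
  · field_simp
    ring
  · field_simp

theorem Finset.dist_centerMass_update [NormedField 𝕜] [SeminormedAddCommGroup E]
    [NormedSpace 𝕜 E] {w : ι → 𝕜} (z : ι → E) (hj : j ∈ s) (t : 𝕜) (hw : ∑ i ∈ s, w i ≠ 0)
    (hw' : ∑ i ∈ s, update w j t i ≠ 0) :
    dist (s.centerMass w z) (s.centerMass (update w j t) z)
      = ‖w j - t‖ / ‖∑ i ∈ s, update w j t i‖ * dist (z j) (s.centerMass w z) := by
  rw [dist_comm, dist_eq_norm, centerMass_update_sub_centerMass z hj t hw hw', norm_smul,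
    norm_div, norm_sub_rev t, dist_eq_norm]

end CenterMassUpdate

theorem Finset.sum_erase_add_min_le_sum_update {ι : Type*} [DecidableEq ι] {s : Finset ι}
    {j : ι} (hj : j ∈ s) (w : ι → ℝ) (t : ℝ) :
    ∑ i ∈ s.erase j, w i + min (w j) t ≤ ∑ i ∈ s, update w j t i := by
  rw [sum_update_of_mem hj, sdiff_singleton_eq_erase, add_comm t]
  gcongr
  exact min_le_right _ _

theorem barycenter_lipschitz_in_mass
    {E : Type*} [NormedAddCommGroup E] [InnerProductSpace ℝ E]
    {n : ℕ} (x : Fin n → E) (z : E) (D : ℝ)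
    (hx : ∀ i, x i ∈ Metric.closedBall z D)
    (m : Fin n → ℝ) (hm : ∀ i, 0 < m i) (j : Fin n) (t : ℝ) (ht : 0 < t) :
    dist ((∑ i, m i)⁻¹ • ∑ i, m i • x i)
         ((∑ i, Function.update m j t i)⁻¹ • ∑ i, Function.update m j t i • x i)
      ≤ (2 * D * |m j - t|) / ((∑ i ∈ Finset.univ.erase j, m i) + min (m j) t) := by
  classical
  change dist (univ.centerMass m x) (univ.centerMass (update m j t) x) ≤ _
  have hj := mem_univ j
  have hden : 0 < ∑ i ∈ univ.erase j, m i + min (m j) t :=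
    add_pos_of_nonneg_of_pos (sum_nonneg fun i _ ↦ (hm i).le) (lt_min (hm j) ht)
  have hS : 0 < ∑ i, m i := sum_pos (fun i _ ↦ hm i) ⟨j, hj⟩
  have hS' := hden.trans_le (sum_erase_add_min_le_sum_update hj m t)
  have hc : univ.centerMass m x ∈ Metric.closedBall z D :=
    (convex_closedBall z D).centerMass_mem (fun i _ ↦ (hm i).le) hS fun i _ ↦ hx i
  have hdist : dist (x j) (univ.centerMass m x) ≤ 2 * D := by
    linarith [dist_triangle_right (x j) (univ.centerMass m x) z, Metric.mem_closedBall.1 (hx j),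
      Metric.mem_closedBall.1 hc]
  calc dist (univ.centerMass m x) (univ.centerMass (update m j t) x)
      = |m j - t| / (∑ i, update m j t i) * dist (x j) (univ.centerMass m x) := by
        rw [dist_centerMass_update x hj t hS.ne' hS'.ne', Real.norm_eq_abs, Real.norm_eq_abs,
          abs_of_pos hS']
    _ ≤ |m j - t| / (∑ i ∈ univ.erase j, m i + min (m j) t) * (2 * D) := by
        gcongr
        exact sum_erase_add_min_le_sum_update hj m t
    _ = 2 * D * |m j - t| / (∑ i ∈ univ.erase j, m i + min (m j) t) := by ring
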